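/- arXiv:1907.10957 — 3 statements merged into one kernel-verified Lean document; each statement's English description precedes it below -/
import Mathlib

section
/- Under equality λ = (p-1)π_p^p/D^p in the eigenvalue estimate, if the gradient comparison Γ(u)^{p/2} ≤ (λ/(p-1))(1 - |u|^p) holds with min u = -1, max u = 1, and if x, y are minimum and maximum points of u, then d(x,y) = D, i.e., the maximum and minimum points of u realize the diameter. -/
/-- `halfPi p = π_p / 2 = ∫₀¹ (1 - s^p)^{-1/p} ds`. -/
noncomputable def halfPi (p : ℝ) : ℝ := ∫ s in (0:ℝ)..1, (1 - |s| ^ p) ^ (-(1 / p))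

theorem stmt_10_general {M : Type*} [MetricSpace M] (D : ℝ)
    (hdiam : ∀ x y : M, dist x y ≤ D)
    (u : M → ℝ) (winv : ℝ → ℝ)
    (hwinv_lo : winv (-1) = -(D/2)) (hwinv_hi : winv 1 = D/2)
    (hgrad : LipschitzWith 1 (fun z => winv (u z)))
    (x y : M) (hmin : u x = -1) (hmax : u y = 1) :
    dist x y = D := by
  refine le_antisymm (hdiam x y) ?_
  calc D ≤ |D| := le_abs_self D
    _ = dist (winv (u x)) (winv (u y)) := by
      rw [hmin, hmax, hwinv_lo, hwinv_hi, Real.dist_eq, ← abs_neg]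
      ring_nf
    _ ≤ dist x y := by simpa using hgrad.dist_le_mul x y

/-- In case of equality `λ = (p-1) π_p^p / D^p` in the eigenvalue estimate, if the gradient
comparison holds (i.e. `w⁻¹ ∘ u` is 1-Lipschitz for the intrinsic distance, where `w⁻¹`
inverts the one-dimensional p-sine model, sending `-1 ↦ -D/2` and `1 ↦ D/2`), with
`min u = -1` attained at `x` and `max u = 1` attained at `y`, then `d(x,y) = D`:
the extremum points of `u` realize the diameter. -/
theorem stmt_10 {M : Type*} [MetricSpace M] (p D lam : ℝ) (hp : 1 < p) (hD : 0 < D)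
    (hdiam : ∀ x y : M, dist x y ≤ D)
    (hlam : lam = (p - 1) * (2 * halfPi p) ^ p / D ^ p)
    (u : M → ℝ) (Γu : M → ℝ) (winv : ℝ → ℝ)
    (hwinv_lo : winv (-1) = -(D/2)) (hwinv_hi : winv 1 = D/2)
    (hgradcomp : ∀ z, (Γu z) ^ (p/2) ≤ (lam / (p - 1)) * (1 - |u z| ^ p))
    (hgrad : LipschitzWith 1 (fun z => winv (u z)))
    (x y : M) (hmin : u x = -1) (hmax : u y = 1)
    (humin : ∀ z, -1 ≤ u z) (humax : ∀ z, u z ≤ 1) :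
    dist x y = D :=
  stmt_10_general D hdiam u winv hwinv_lo hwinv_hi hgrad x y hmin hmax
end

section
/- Let w be the first nonconstant Neumann eigenfunction of L = d²/ds² - a s d/ds on [-D/2, D/2], normalized with w(0) = 0 and w > 0 on (0, D/2]. Then w is odd and w' > 0 on [0, D/2). -/
/-- Let `w` be the first nonconstant Neumann eigenfunction of `L = d²/ds² - a s d/ds` on
`[-D/2, D/2]` (in particular its eigenvalue `λ̄ > 0` is simple: any Neumann solution of the
same equation is a multiple of `w`), normalized with `w 0 = 0` and `w > 0` on `(0, D/2]`.
Then `w` is odd and `w' > 0` on `[0, D/2)`. -/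
theorem stmt_14 (a D lam : ℝ) (hD : 0 < D) (hlam : 0 < lam)
    (w : ℝ → ℝ) (hw : ContDiff ℝ (⊤ : ℕ∞) w)
    (hode : ∀ s ∈ Set.Icc (-(D/2)) (D/2),
      deriv (deriv w) s - a * s * deriv w s = -lam * w s)
    (hneu₁ : deriv w (D/2) = 0) (hneu₂ : deriv w (-(D/2)) = 0)
    (hnconst : ∃ s₁ ∈ Set.Icc (-(D/2)) (D/2), ∃ s₂ ∈ Set.Icc (-(D/2)) (D/2), w s₁ ≠ w s₂)
    (hsimple : ∀ v : ℝ → ℝ, ContDiff ℝ (⊤ : ℕ∞) v →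
      (∀ s ∈ Set.Icc (-(D/2)) (D/2), deriv (deriv v) s - a * s * deriv v s = -lam * v s) →
      deriv v (D/2) = 0 → deriv v (-(D/2)) = 0 →
      ∃ c : ℝ, ∀ s ∈ Set.Icc (-(D/2)) (D/2), v s = c * w s)
    (h0 : w 0 = 0) (hpos : ∀ s ∈ Set.Ioc 0 (D/2), 0 < w s) :
    (∀ s ∈ Set.Icc (-(D/2)) (D/2), w (-s) = -w s)
    ∧ (∀ s ∈ Set.Ico 0 (D/2), 0 < deriv w s) := by
  have hw1 : Differentiable ℝ w := hw.differentiable (by simp)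
  have hwi : ContDiff ℝ ((⊤:ℕ∞)) w := hw.of_le (by simp)
  have hw' : ContDiff ℝ ((⊤:ℕ∞)) (deriv w) := (contDiff_infty_iff_deriv.mp hwi).2
  have hw'1 : Differentiable ℝ (deriv w) := hw'.differentiable (by simp)
  -- the "flux" function φ
  set φ : ℝ → ℝ := fun s => Real.exp (-a * s^2 / 2) * deriv w s with hφ
  have hφd : ∀ s : ℝ, HasDerivAt φ
      (Real.exp (-a * s^2 / 2) * (-a * s) * deriv w s
        + Real.exp (-a * s^2 / 2) * deriv (deriv w) s) s := by
    intro s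
    have h1 : HasDerivAt (fun s : ℝ => -a * s^2 / 2) (-a * s) s := by
      have := ((hasDerivAt_pow 2 s).const_mul (-a)).div_const 2
      exact this.congr_deriv (by ring)
    have h2 : HasDerivAt (fun s : ℝ => Real.exp (-a * s^2 / 2))
        (Real.exp (-a * s^2 / 2) * (-a * s)) s := h1.exp
    exact h2.mul ((hw'1 s).hasDerivAt)
  have hφd' : ∀ s ∈ Set.Icc (-(D/2)) (D/2),
      HasDerivAt φ (-(lam * Real.exp (-a * s^2 / 2) * w s)) s := by
    intro s hs
    have h := hφd s
    have he : deriv (deriv w) s = a * s * deriv w s - lam * w s := by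
      have := hode s hs; linarith
    rw [he] at h
    convert h using 1
    ring
  -- key positivity of deriv w on [0, D/2)
  have key : ∀ s ∈ Set.Ico 0 (D/2), 0 < deriv w s := by
    intro s hs
    obtain ⟨hs0, hsD⟩ := hs
    have hsub : Set.uIcc s (D/2) ⊆ Set.Icc (-(D/2)) (D/2) := by
      rw [Set.uIcc_of_le hsD.le]
      intro t ht
      exact ⟨by linarith [ht.1], ht.2⟩
    have hwc : Continuous w := hw.continuous
    have hexpc : Continuous fun t : ℝ => Real.exp (-a * t^2 / 2) :=
      Real.continuous_exp.comp ((continuous_const.mul (continuous_pow 2)).div_const 2)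
    have hcont : Continuous fun t : ℝ => -(lam * Real.exp (-a * t^2 / 2) * w t) :=
      (((continuous_const.mul hexpc)).mul hwc).neg
    have hftc := intervalIntegral.integral_eq_sub_of_hasDerivAt
      (fun t ht => hφd' t (hsub ht)) (hcont.intervalIntegrable s (D/2))
    have hφD : φ (D/2) = 0 := by simp [hφ, hneu₁]
    have hpos' : 0 < ∫ t in s..(D/2), lam * Real.exp (-a * t^2 / 2) * w t := by
      apply intervalIntegral.intervalIntegral_pos_of_pos_on
      · exact ((continuous_const.mul hexpc).mul hwc).intervalIntegrable s (D/2)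
      · intro t ht
        have hwt : 0 < w t := hpos t ⟨lt_of_le_of_lt hs0 ht.1, ht.2.le⟩
        positivity
      · exact hsD
    rw [intervalIntegral.integral_neg] at hftc
    have hφs : 0 < φ s := by rw [hφD] at hftc; linarith
    have hφs2 : 0 < Real.exp (-a * s^2 / 2) * deriv w s := hφs
    have := Real.exp_pos (-a * s^2 / 2)
    nlinarith [hφs2, this]
  refine ⟨?_, key⟩
  -- oddness via the reflected solution v s = -w (-s)
  set v : ℝ → ℝ := fun s => -w (-s) with hv
  have hvD : ∀ s : ℝ, HasDerivAt v (deriv w (-s)) s := by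
    intro s
    have h1 : HasDerivAt (fun s : ℝ => w (-s)) (deriv w (-s) * (-1)) s :=
      (hw1 (-s)).hasDerivAt.comp s (hasDerivAt_neg s)
    have := h1.neg
    exact this.congr_deriv (by ring)
  have hvderiv : deriv v = fun s => deriv w (-s) := funext fun s => (hvD s).deriv
  have hvD2 : ∀ s : ℝ, HasDerivAt (deriv v) (-(deriv (deriv w) (-s))) s := by
    intro s
    rw [hvderiv]
    have h1 : HasDerivAt (fun s : ℝ => deriv w (-s)) (deriv (deriv w) (-s) * (-1)) s :=
      (hw'1 (-s)).hasDerivAt.comp s (hasDerivAt_neg s)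
    convert h1 using 1
    ring
  have hvsmooth : ContDiff ℝ (⊤ : ℕ∞) v := (hw.comp (contDiff_neg)).neg
  have hvode : ∀ s ∈ Set.Icc (-(D/2)) (D/2),
      deriv (deriv v) s - a * s * deriv v s = -lam * v s := by
    intro s hs
    have hns : -s ∈ Set.Icc (-(D/2)) (D/2) := ⟨by linarith [hs.2], by linarith [hs.1]⟩
    have hode' := hode (-s) hns
    rw [(hvD2 s).deriv, hvderiv]
    simp only [hv]
    nlinarith [hode']
  have hvneu₁ : deriv v (D/2) = 0 := by rw [hvderiv]; exact hneu₂
  have hvneu₂ : deriv v (-(D/2)) = 0 := by rw [hvderiv]; simp [hneu₁]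
  obtain ⟨c, hc⟩ := hsimple v hvsmooth hvode hvneu₁ hvneu₂
  have hmem : ∀ s ∈ Set.Icc (-(D/2)) (D/2), (-s) ∈ Set.Icc (-(D/2)) (D/2) := by
    intro s hs; exact ⟨by linarith [hs.2], by linarith [hs.1]⟩
  have hrel : ∀ s ∈ Set.Icc (-(D/2)) (D/2), w (-s) = -(c * w s) := by
    intro s hs
    have := hc s hs
    simp only [hv] at this
    linarith
  have hD2mem : (D/2) ∈ Set.Icc (-(D/2)) (D/2) := ⟨by linarith, le_refl _⟩
  have hc2 : c * c = 1 := by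
    have h1 := hrel (D/2) hD2mem
    have h2 := hrel (-(D/2)) (hmem _ hD2mem)
    rw [neg_neg] at h2
    have hwpos : 0 < w (D/2) := hpos (D/2) ⟨by linarith, le_refl _⟩
    have h3 : (c*c - 1) * w (D/2) = 0 := by linear_combination c * h1 - h2
    rcases mul_eq_zero.mp h3 with h | h
    · linarith
    · linarith
  have hc1 : c = 1 := by
    rcases mul_self_eq_one_iff.mp hc2 with h | h
    · exact h
    · exfalso
      -- c = -1 means w is even, hence deriv w 0 = 0, contradicting key
      have heven : ∀ s ∈ Set.Icc (-(D/2)) (D/2), w (-s) = w s := by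
        intro s hs
        have := hrel s hs
        rw [h] at this
        linarith
      have hnbhd : Set.Icc (-(D/2)) (D/2) ∈ nhds (0:ℝ) :=
        Icc_mem_nhds (by linarith) (by linarith)
      have hEq : (fun s => w (-s)) =ᶠ[nhds (0:ℝ)] w := by
        filter_upwards [hnbhd] with s hs
        exact heven s hs
      have hd1 : deriv (fun s => w (-s)) 0 = deriv w 0 := hEq.deriv_eq
      have hd2 : deriv (fun s : ℝ => w (-s)) 0 = -(deriv w 0) := by
        have h1 : HasDerivAt (fun s : ℝ => w (-s)) (deriv w (-(0:ℝ)) * (-1)) 0 :=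
          (hw1 (-(0:ℝ))).hasDerivAt.comp 0 (hasDerivAt_neg 0)
        rw [h1.deriv]
        simp
      have h0pos := key 0 ⟨le_refl _, by linarith⟩
      rw [hd2] at hd1
      linarith
  intro s hs
  have := hrel s hs
  rw [hc1] at this
  linarith
end

section
/- Let w solve w'' - asw' + λw = 0 on [0, D/2] with w(0) = 0, w'(0) > 0, w > 0 on (0, D/2], and Neumann condition w'(D/2) = 0 with λ > 0. Then w' > 0 on [0, D/2). -/
open Set Filter Topology

/-- If `f c = 0` and `f' c < 0`, then `f > 0` just to the left of `c`. -/
lemma aux_left_pos {f : ℝ → ℝ} {c L : ℝ} (hf : HasDerivAt f L c) (hc : f c = 0)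
    (hL : L < 0) : ∀ᶠ x in 𝓝[<] c, 0 < f x := by
  rw [hasDerivAt_iff_tendsto_slope] at hf
  have h1 : ∀ᶠ x in 𝓝[≠] c, slope f c x < 0 := hf.eventually_lt_const hL
  have h2 : ∀ᶠ x in 𝓝[<] c, slope f c x < 0 :=
    h1.filter_mono (nhdsWithin_mono _ (fun x hx => ne_of_lt hx))
  filter_upwards [h2, self_mem_nhdsWithin] with x hx hx'
  rw [slope_def_field, hc, sub_zero] at hx
  rcases div_neg_iff.mp hx with ⟨h, h'⟩ | ⟨h, h'⟩
  · exact h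
  · exact absurd h' (not_lt.mpr (le_of_lt (sub_neg.mpr hx')))

/-- If `f c = 0` and `f' c < 0`, then `f < 0` just to the right of `c`. -/
lemma aux_right_neg {f : ℝ → ℝ} {c L : ℝ} (hf : HasDerivAt f L c) (hc : f c = 0)
    (hL : L < 0) : ∀ᶠ x in 𝓝[>] c, f x < 0 := by
  rw [hasDerivAt_iff_tendsto_slope] at hf
  have h1 : ∀ᶠ x in 𝓝[≠] c, slope f c x < 0 := hf.eventually_lt_const hL
  have h2 : ∀ᶠ x in 𝓝[>] c, slope f c x < 0 :=
    h1.filter_mono (nhdsWithin_mono _ (fun x hx => ne_of_gt hx))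
  filter_upwards [h2, self_mem_nhdsWithin] with x hx hx'
  rw [slope_def_field, hc, sub_zero] at hx
  rcases div_neg_iff.mp hx with ⟨h, h'⟩ | ⟨h, h'⟩
  · exact absurd h' (not_lt.mpr (le_of_lt (sub_pos.mpr hx')))
  · exact h

/-- If `w` solves `w'' = a s w' - λ w` on `[0, D/2]` with `λ > 0`, `w(0) = 0`, `w'(0) > 0`,
`w > 0` on `(0, D/2]`, and the Neumann condition `w'(D/2) = 0`, then `w' > 0` on `[0, D/2)`. -/
theorem stmt_15 (a lam D : ℝ) (hlam : 0 < lam) (hD : 0 < D)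
    (w : ℝ → ℝ) (hw : ContDiff ℝ (⊤ : ℕ∞) w)
    (hode : ∀ s ∈ Set.Icc 0 (D/2), deriv (deriv w) s = a * s * deriv w s - lam * w s)
    (h0 : w 0 = 0) (h0' : 0 < deriv w 0)
    (hpos : ∀ s ∈ Set.Ioc 0 (D/2), 0 < w s)
    (hneu : deriv w (D/2) = 0) :
    ∀ s ∈ Set.Ico 0 (D/2), 0 < deriv w s := by
  set f := deriv w with hf
  obtain ⟨hwdiff, hfC⟩ := contDiff_infty_iff_deriv.mp (hw.of_le (by simp))
  have hfcont : Continuous f := hfC.continuous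
  have hfderiv : ∀ c : ℝ, HasDerivAt f (deriv f c) c :=
    fun c => (hfC.differentiable (by norm_num) c).hasDerivAt
  have hD2 : 0 < D / 2 := by linarith
  -- w'' (D/2) < 0
  have hwD2 : 0 < w (D/2) := hpos _ ⟨hD2, le_refl _⟩
  have hD2mem : (D/2 : ℝ) ∈ Set.Icc 0 (D/2) := ⟨le_of_lt hD2, le_refl _⟩
  have hsecD2 : deriv f (D/2) < 0 := by
    rw [hf, hode _ hD2mem, hneu]
    nlinarith
  -- f > 0 just to the left of D/2
  have hleft : ∀ᶠ x in 𝓝[<] (D/2), 0 < f x :=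
    aux_left_pos (hfderiv _) hneu hsecD2
  obtain ⟨l, hl, hlpos⟩ := (mem_nhdsLT_iff_exists_Ioo_subset).mp hleft
  rw [Set.mem_Iio] at hl
  by_contra hcon
  push_neg at hcon
  obtain ⟨s, ⟨hs0, hsD⟩, hsle⟩ := hcon
  -- find a zero of f in [0, s]
  have hivt : (0 : ℝ) ∈ f '' Set.Icc 0 s :=
    intermediate_value_Icc' hs0 (hfcont.continuousOn) ⟨hsle, le_of_lt h0'⟩
  obtain ⟨z, ⟨hz0, hzs⟩, hz⟩ := hivt
  have hzD : z < D / 2 := lt_of_le_of_lt hzs hsD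
  have hzl : z ≤ l := by
    by_contra h
    push_neg at h
    exact absurd hz (ne_of_gt (hlpos ⟨h, hzD⟩))
  have hl0 : 0 ≤ l := le_trans hz0 hzl
  -- the set of zeros of f in [0, l]
  set Z : Set ℝ := Set.Icc 0 l ∩ f ⁻¹' {0} with hZ
  have hZcomp : IsCompact Z :=
    isCompact_Icc.inter_right (isClosed_singleton.preimage hfcont)
  have hZne : Z.Nonempty := ⟨z, ⟨hz0, hzl⟩, hz⟩
  set s₀ := sSup Z with hs₀
  have hs₀mem : s₀ ∈ Z := hZcomp.sSup_mem hZne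
  obtain ⟨⟨hs₀0, hs₀l⟩, hs₀z⟩ := hs₀mem
  rw [Set.mem_preimage, Set.mem_singleton_iff] at hs₀z
  have hs₀D : s₀ < D / 2 := lt_of_le_of_lt hs₀l hl
  have hs₀pos : 0 < s₀ := by
    rcases lt_or_eq_of_le hs₀0 with h | h
    · exact h
    · exact absurd (h ▸ hs₀z) (ne_of_gt h0')
  have hws₀ : 0 < w s₀ := hpos _ ⟨hs₀pos, le_of_lt hs₀D⟩
  have hsec : deriv f s₀ < 0 := by
    rw [hf, hode _ ⟨hs₀0, le_of_lt hs₀D⟩, hs₀z]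
    nlinarith
  -- f < 0 just to the right of s₀
  have hright : ∀ᶠ x in 𝓝[>] s₀, f x < 0 := aux_right_neg (hfderiv _) hs₀z hsec
  obtain ⟨u, hu, huneg⟩ := (mem_nhdsGT_iff_exists_Ioo_subset).mp hright
  rw [Set.mem_Ioi] at hu
  -- pick p ∈ (s₀, min u (D/2)) with f p < 0
  obtain ⟨p, hp1, hp2⟩ := exists_between (lt_min hu hs₀D)
  have hpu : p < u := lt_of_lt_of_le hp2 (min_le_left _ _)
  have hpD : p < D / 2 := lt_of_lt_of_le hp2 (min_le_right _ _)
  have hfp : f p < 0 := huneg ⟨hp1, hpu⟩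
  -- pick q ∈ (max l p, D/2) with f q > 0
  obtain ⟨q, hq1, hq2⟩ := exists_between (max_lt hl hpD)
  have hfq : 0 < f q := hlpos ⟨lt_of_le_of_lt (le_max_left _ _) hq1, hq2⟩
  have hpq : p ≤ q := le_of_lt (lt_of_le_of_lt (le_max_right _ _) hq1)
  -- IVT gives a zero r ∈ [p, q]
  have hivt2 : (0 : ℝ) ∈ f '' Set.Icc p q :=
    intermediate_value_Icc hpq (hfcont.continuousOn) ⟨le_of_lt hfp, le_of_lt hfq⟩
  obtain ⟨r, ⟨hrp, hrq⟩, hr⟩ := hivt2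
  have hrs₀ : s₀ < r := lt_of_lt_of_le hp1 hrp
  rcases le_or_gt r l with h | h
  · -- r ∈ Z, contradicting sSup
    have : r ≤ s₀ := le_csSup hZcomp.bddAbove ⟨⟨le_trans (le_of_lt hs₀pos) (le_of_lt hrs₀), h⟩, hr⟩
    linarith
  · -- r ∈ (l, D/2), so f r > 0, contradicting f r = 0
    have hrD : r < D / 2 := lt_of_le_of_lt hrq hq2
    exact absurd hr (ne_of_gt (hlpos ⟨h, hrD⟩))
end
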